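/- arXiv:1310.5246 — 3 statements merged into one kernel-verified Lean document; each statement's English description precedes it below -/
import Mathlib

section
/- Let G be a group, n a positive integer, w an element of the free group F_n = FreeGroup (Fin n), g h : Fin n → G two n-tuples of elements of G, and a₁, b₁, a₂, b₂ ∈ G. Then a₁ · w(g) · b₁ = a₂ · w(h) · b₂ holds in G if and only if (a₂⁻¹ · a₁ · b₁ · b₂⁻¹) · w(g') = w(h), where g' : Fin n → G is the componentwise conjugate tuple g' i = (b₁b₂⁻¹)⁻¹ · (g i) · (b₁b₂⁻¹). (This shows that every instance of the general Post correspondence problem in G is equivalent to one whose constants b₁, a₂, b₂ are all trivial.) -/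
lemma lift_conj {G : Type*} [Group G] {n : ℕ} (g : Fin n → G) (c : G)
    (w : FreeGroup (Fin n)) :
    (FreeGroup.lift (fun i => c⁻¹ * g i * c)) w =
      c⁻¹ * (FreeGroup.lift g) w * c := by
  have : (FreeGroup.lift (fun i => c⁻¹ * g i * c)) =
      ((MulAut.conj c⁻¹).toMonoidHom.comp (FreeGroup.lift g)) := by
    apply FreeGroup.ext_hom
    intro i
    simp [MulAut.conj]
  rw [this]
  simp [MulAut.conj]

/-- Every instance of the general Post correspondence problem in a group `G` is
equivalent to one whose constants `b₁, a₂, b₂` are all trivial. -/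
theorem gpcp_reduce_constants {G : Type*} [Group G] (n : ℕ) (hn : 0 < n)
    (w : FreeGroup (Fin n)) (g h : Fin n → G) (a₁ b₁ a₂ b₂ : G) :
    a₁ * (FreeGroup.lift g) w * b₁ = a₂ * (FreeGroup.lift h) w * b₂ ↔
      (a₂⁻¹ * a₁ * b₁ * b₂⁻¹) *
        (FreeGroup.lift (fun i => (b₁ * b₂⁻¹)⁻¹ * g i * (b₁ * b₂⁻¹))) w =
      (FreeGroup.lift h) w := by
  rw [lift_conj g (b₁ * b₂⁻¹) w]
  constructor
  · intro e
    have : (FreeGroup.lift g) w = a₁⁻¹ * (a₂ * (FreeGroup.lift h) w * b₂) * b₁⁻¹ := by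
      rw [← e]; group
    rw [this]; group
  · intro e
    have : (FreeGroup.lift h) w =
        (a₂⁻¹ * a₁ * b₁ * b₂⁻¹) * ((b₁ * b₂⁻¹)⁻¹ * (FreeGroup.lift g) w * (b₁ * b₂⁻¹)) := e.symm
    rw [this]; group
end

section
/- Let G be a group, A ⊆ G a subset with Subgroup.closure A = ⊤, and R ⊆ G a finite subset. Let H = G ⧸ Subgroup.normalClosure R and define D_R = {(a, a⁻¹) | a ∈ A} ∪ {(a⁻¹, a) | a ∈ A} ∪ {(r, 1) | r ∈ R} ∪ {(r⁻¹, 1) | r ∈ R} ⊆ G × G. Then for every w ∈ G, the image of w in H is trivial if and only if there exists a finite list of pairs (u₁,v₁),…,(u_M,v_M), each belonging to D_R, such that w · u₁ · u₂ ⋯ u_M = v₁⁻¹ · v₂⁻¹ ⋯ v_M⁻¹ in G. (This shows that the word problem in every finitely presented quotient of G reduces to the general Post correspondence problem in G with the instance given by the pairs (u, v⁻¹) for (u,v) ∈ D_R and constant w.) -/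
/-!
Send a pair `(u, v)` to `(u, v⁻¹) ∈ G × G`. Then `D_R` becomes the symmetrisation of
`{(a, a) | a ∈ A} ∪ {(r, 1) | r ∈ R}`, and the pairs of PCP products of words over `D_R` are
exactly the subgroup `K` of `G × G` generated by this set. Since `A` generates `G`, `K` contains the
diagonal, and conjugating `(r, 1)` by diagonal elements shows that `K` is
`{(x, y) | x ≡ y mod ⟪R⟫}`. A solution `w x = y` with `(x, y) ∈ K` exists iff `w ≡ 1 mod ⟪R⟫`.
-/

/-- The set of pairs `D_R` associated to a generating set `A` and a set of
relators `R` in a group `G`. -/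
def pcpPairs {G : Type*} [Group G] (A R : Set G) : Set (G × G) :=
  {p | ∃ a ∈ A, p = (a, a⁻¹)} ∪ {p | ∃ a ∈ A, p = (a⁻¹, a)} ∪
  {p | ∃ r ∈ R, p = (r, 1)} ∪ {p | ∃ r ∈ R, p = (r⁻¹, 1)}

namespace pcpPairs

open Subgroup

variable {G : Type*} [Group G] {A R : Set G}

def generators (A R : Set G) : Set (G × G) :=
  (fun a => (a, a)) '' A ∪ (fun r => (r, 1)) '' R

theorem mem_iff_mem_generators_union_inv {p : G × G} :
    p ∈ pcpPairs A R ↔ (p.1, p.2⁻¹) ∈ generators A R ∪ (generators A R)⁻¹ := by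
  obtain ⟨u, v⟩ := p
  simp only [pcpPairs, generators, Set.mem_union, Set.mem_ofPred_eq, Set.mem_inv, Set.mem_image,
    Prod.ext_iff, Prod.inv_mk, inv_inv]
  aesop

theorem exists_list_iff_mem_closure {x y : G} :
    (∃ L : List (G × G), (∀ p ∈ L, p ∈ pcpPairs A R) ∧
      (L.map Prod.fst).prod = x ∧ (L.map fun p => p.2⁻¹).prod = y) ↔
      (x, y) ∈ closure (generators A R) := by
  let σ : G × G → G × G := fun p => (p.1, p.2⁻¹)
  have prod_map_σ (L : List (G × G)) :
      (L.map σ).prod = ((L.map Prod.fst).prod, (L.map fun p => p.2⁻¹).prod) := by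
    ext
    · simpa [Function.comp_def, σ] using map_list_prod (MonoidHom.fst G G) (L.map σ)
    · simpa [Function.comp_def, σ] using map_list_prod (MonoidHom.snd G G) (L.map σ)
  rw [← mem_toSubmonoid, closure_toSubmonoid, ← SetLike.mem_coe,
    Submonoid.closure_eq_image_prod]
  constructor
  · rintro ⟨L, hL, rfl, rfl⟩
    refine ⟨L.map σ, fun q hq => ?_, prod_map_σ L⟩
    obtain ⟨p, hp, rfl⟩ := List.mem_map.1 hq
    exact mem_iff_mem_generators_union_inv.1 (hL p hp)
  · rintro ⟨l, hl, hlxy⟩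
    have hσσ : (l.map σ).map σ = l := by simp [List.map_map, Function.comp_def, σ]
    refine ⟨l.map σ, fun p hp => ?_, ?_⟩
    · obtain ⟨q, hq, rfl⟩ := List.mem_map.1 hp
      exact mem_iff_mem_generators_union_inv.2 (by simpa [σ] using hl q hq)
    · rw [← Prod.mk.injEq, ← prod_map_σ, hσσ, hlxy]

theorem diag_mem_closure_generators (hA : closure A = ⊤) (g : G) :
    (g, g) ∈ closure (generators A R) := by
  have hA_le : closure A ≤
      (closure (generators A R)).comap ((MonoidHom.id G).prod (MonoidHom.id G)) :=
    (closure_le _).2 fun a ha => subset_closure (Or.inl ⟨a, ha, rfl⟩)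
  exact hA_le (hA ▸ mem_top g)

theorem normalClosure_le_comap_inl_closure_generators (hA : closure A = ⊤) :
    normalClosure R ≤ (closure (generators A R)).comap (MonoidHom.inl G G) := by
  have : ((closure (generators A R)).comap (MonoidHom.inl G G)).Normal := by
    refine ⟨fun n hn g => ?_⟩
    simpa using mul_mem (mul_mem (diag_mem_closure_generators hA g) hn)
      (diag_mem_closure_generators (R := R) hA g⁻¹)
  exact normalClosure_le_normal fun r hr => subset_closure (Or.inr ⟨r, hr, rfl⟩)

theorem mem_closure_generators_iff (hA : closure A = ⊤) {x y : G} :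
    (x, y) ∈ closure (generators A R) ↔
      (x : G ⧸ normalClosure R) = y := by
  constructor
  · refine fun hxy => MonoidHom.eqOn_closure
      (f := (QuotientGroup.mk' _).comp (MonoidHom.fst G G))
      (g := (QuotientGroup.mk' _).comp (MonoidHom.snd G G)) ?_ hxy
    rintro _ (⟨a, -, rfl⟩ | ⟨r, hr, rfl⟩)
    · rfl
    · simpa [QuotientGroup.eq_one_iff] using subset_normalClosure hr
  · intro hxy
    have hxy' : x * y⁻¹ ∈ normalClosure R := by
      simpa [QuotientGroup.eq_iff_div_mem, div_eq_mul_inv] using hxy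
    have hK := normalClosure_le_comap_inl_closure_generators hA hxy'
    simpa using mul_mem (mem_comap.1 hK) (diag_mem_closure_generators hA y)

end pcpPairs

theorem quotient_trivial_iff_gpcp_general {G : Type*} [Group G] (A R : Set G)
    (hA : Subgroup.closure A = ⊤) (w : G) :
    ((w : G ⧸ Subgroup.normalClosure R) = 1) ↔
      ∃ L : List (G × G), (∀ p ∈ L, p ∈ pcpPairs A R) ∧
        w * (L.map Prod.fst).prod = (L.map (fun p => p.2⁻¹)).prod := by
  constructor
  · intro hw
    have hK : (w⁻¹, (1 : G)) ∈ Subgroup.closure (pcpPairs.generators A R) :=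
      (pcpPairs.mem_closure_generators_iff hA).2 (by simp [hw])
    obtain ⟨L, hL, hU, hV⟩ := pcpPairs.exists_list_iff_mem_closure.2 hK
    exact ⟨L, hL, by rw [hU, hV, mul_inv_cancel]⟩
  · rintro ⟨L, hL, hw⟩
    have hK := pcpPairs.exists_list_iff_mem_closure.1 ⟨L, hL, rfl, rfl⟩
    have hUV := (pcpPairs.mem_closure_generators_iff hA).1 hK
    rwa [← hw, QuotientGroup.mk_mul, right_eq_mul] at hUV

/-- Claim 2 of Proposition 4.2: `w` is trivial in `G ⧸ ⟪R⟫` iff there is a finite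
sequence of pairs `(uᵢ, vᵢ)` from `D_R` with `w u₁ u₂ ⋯ u_M = v₁⁻¹ v₂⁻¹ ⋯ v_M⁻¹`
in `G`; i.e. the word problem in the quotient reduces to `GPCP(G)`. -/
theorem quotient_trivial_iff_gpcp {G : Type*} [Group G] (A R : Set G)
    (hA : Subgroup.closure A = ⊤) (hR : R.Finite) (w : G) :
    ((w : G ⧸ Subgroup.normalClosure R) = 1) ↔
      ∃ L : List (G × G), (∀ p ∈ L, p ∈ pcpPairs A R) ∧
        w * (L.map Prod.fst).prod = (L.map (fun p => p.2⁻¹)).prod :=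
  quotient_trivial_iff_gpcp_general A R hA w
end

section
/- Let G be a group generated by a subset S (i.e., Subgroup.closure S = ⊤) and let c ≥ 1. Then γ_c(G) is generated as a subgroup by γ_{c+1}(G) together with the left-normed iterated commutators [x₁, x₂, …, x_c] = [⋯[[x₁,x₂],x₃],…,x_c] with all xᵢ ∈ S; that is, γ_c(G) = Subgroup.closure (γ_{c+1}(G) ∪ {[x₁,…,x_c] | x₁,…,x_c ∈ S}). -/
/-!
Modulo `γ_{c+1}`, the commutator map `γ_{c-1} × G → γ_c` is bimultiplicative, because all
commutators it produces are central in `G / γ_{c+1}`. So if `γ_{c-1}` is generated modulo `γ_c`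
by left-normed commutators of length `c - 1` in `S` and `G` is generated by `S`, then `γ_c` is
generated modulo `γ_{c+1}` by their commutators with elements of `S`, which are the left-normed
commutators of length `c`. Induction on `c` finishes the proof.
-/

open scoped commutatorElement

/-- The left-normed iterated commutator `[x₁, x₂, …, x_c] = [⋯[[x₁,x₂],x₃],…,x_c]`
of a list of group elements (equal to `1` for the empty list). -/
def leftNormedCommutator {G : Type*} [Group G] : List G → G
  | [] => 1
  | x :: xs => xs.foldl (fun a b => ⁅a, b⁆) x

open Subgroup

section

variable {G : Type*} [Group G]

theorem leftNormedCommutator_append_singleton {l : List G} (hl : l ≠ []) (s : G) :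
    leftNormedCommutator (l ++ [s]) = ⁅leftNormedCommutator l, s⁆ := by
  obtain ⟨x, xs, rfl⟩ := List.exists_cons_of_ne_nil hl
  simp [leftNormedCommutator, List.foldl_append]

def leftNormedCommutators (S : Set G) (n : ℕ) : Set G :=
  {g | ∃ l : List G, l.length = n ∧ (∀ x ∈ l, x ∈ S) ∧ g = leftNormedCommutator l}

theorem leftNormedCommutators_one (S : Set G) : leftNormedCommutators S 1 = S := by
  ext g
  constructor
  · rintro ⟨l, hl, hlS, rfl⟩
    obtain ⟨x, rfl⟩ := List.length_eq_one_iff.mp hl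
    simpa [leftNormedCommutator] using hlS
  · intro hg
    exact ⟨[g], rfl, by simpa using hg, rfl⟩

theorem leftNormedCommutators_succ_succ (S : Set G) (n : ℕ) :
    leftNormedCommutators S (n + 2) =
      Set.image2 (fun a b => ⁅a, b⁆) (leftNormedCommutators S (n + 1)) S := by
  ext g
  constructor
  · rintro ⟨l, hl, hlS, rfl⟩
    obtain ⟨l', s, rfl⟩ := (List.eq_nil_or_concat' l).resolve_left (by rintro rfl; simp at hl)
    have hl' : l' ≠ [] := by rintro rfl; simp at hl
    refine ⟨_, ⟨l', by simpa using hl, fun x hx => hlS x (by simp [hx]), rfl⟩, s,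
      hlS s (by simp), (leftNormedCommutator_append_singleton hl' s).symm⟩
  · rintro ⟨_, ⟨l, hl, hlS, rfl⟩, s, hs, rfl⟩
    have hl' : l ≠ [] := by rintro rfl; simp at hl
    refine ⟨l ++ [s], by simp [hl], ?_, (leftNormedCommutator_append_singleton hl' s).symm⟩
    simpa [or_imp, forall_and] using ⟨hlS, hs⟩

theorem leftNormedCommutators_subset_lowerCentralSeries (S : Set G) (n : ℕ) :
    leftNormedCommutators S (n + 1) ⊆ (⊤ : Subgroup G).lowerCentralSeries n := by
  induction n with
  | zero => exact fun g _ => mem_top g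
  | succ n ih =>
    rw [leftNormedCommutators_succ_succ]
    rintro _ ⟨g, hg, s, -, rfl⟩
    exact commutator_mem_commutator (ih hg) (mem_top s)

/-- `y ↦ ⁅a, y⁆` is multiplicative where its values are central. -/
theorem commutatorElement_mem_of_mem_closure {a : G} {B : Set G} {K : Subgroup G}
    (hcen : ∀ y ∈ closure B, ⁅a, y⁆ ∈ center G) (hB : ∀ b ∈ B, ⁅a, b⁆ ∈ K)
    {y : G} (hy : y ∈ closure B) : ⁅a, y⁆ ∈ K := by
  induction hy using closure_induction with
  | mem b hb => exact hB b hb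
  | one => simp
  | mul y₁ y₂ hy₁ hy₂ ih₁ ih₂ =>
    rw [commutatorElement_mul_right_eq_mul_conj, mul_assoc _ y₁, mul_assoc,
      mem_center_iff.mp (hcen y₂ hy₂) y₁, mul_inv_cancel_right]
    exact mul_mem ih₁ ih₂
  | inv y hy ih =>
    have hcen' : ⁅y, a⁆ ∈ center G := by
      rw [← commutatorElement_inv]
      exact inv_mem (hcen y hy)
    rw [commutatorElement_inv_right, mem_center_iff.mp hcen', inv_mul_cancel_right,
      ← commutatorElement_inv]
    exact inv_mem ih

theorem commutator_closure_le_closure_image2_of_le_center (A B : Set G)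
    (h : ⁅closure A, closure B⁆ ≤ center G) :
    ⁅closure A, closure B⁆ ≤ closure (Set.image2 (fun a b => ⁅a, b⁆) A B) := by
  have hA : ∀ a ∈ A, ∀ y ∈ closure B, ⁅a, y⁆ ∈ closure (Set.image2 (fun a b => ⁅a, b⁆) A B) :=
    fun a ha y hy => commutatorElement_mem_of_mem_closure
      (fun y hy => h (commutator_mem_commutator (subset_closure ha) hy))
      (fun b hb => subset_closure (Set.mem_image2_of_mem ha hb)) hy
  rw [commutator_le]
  intro x hx y hy
  rw [← commutatorElement_inv]
  refine inv_mem (commutatorElement_mem_of_mem_closure (fun x hx => ?_)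
    (fun a ha => ?_) hx)
  · rw [← commutatorElement_inv]
    exact inv_mem (h (commutator_mem_commutator hx hy))
  · rw [← commutatorElement_inv]
    exact inv_mem (hA a ha y hy)

/-- Passing to `G ⧸ N`, where `⁅closure A, closure B⁆` becomes central. -/
theorem commutator_closure_le_closure_image2_sup (A B : Set G) (N : Subgroup G) [N.Normal]
    (h : ⁅⁅closure A, closure B⁆, ⊤⁆ ≤ N) :
    ⁅closure A, closure B⁆ ≤ closure (Set.image2 (fun a b => ⁅a, b⁆) A B) ⊔ N := by
  let π := QuotientGroup.mk' N
  have hπ : Function.Surjective π := QuotientGroup.mk'_surjective N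
  have hcen : ⁅closure (π '' A), closure (π '' B)⁆ ≤ center (G ⧸ N) := by
    rw [← commutator_top_right_eq_bot_iff_le_center, ← MonoidHom.map_closure,
      ← MonoidHom.map_closure, ← map_top_of_surjective π hπ, ← map_commutator,
      ← map_commutator, Subgroup.map_eq_bot_iff, QuotientGroup.ker_mk']
    exact h
  have hmap := commutator_closure_le_closure_image2_of_le_center _ _ hcen
  rw [← Set.image_image2_distrib (fun a b => map_commutatorElement π a b),
    ← MonoidHom.map_closure, ← MonoidHom.map_closure, ← MonoidHom.map_closure,
    ← map_commutator, map_le_iff_le_comap, comap_map_eq, QuotientGroup.ker_mk'] at hmap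
  exact hmap

theorem lowerCentralSeries_eq_closure_leftNormedCommutators {S : Set G}
    (hS : closure S = ⊤) (n : ℕ) :
    (⊤ : Subgroup G).lowerCentralSeries n =
      closure (((⊤ : Subgroup G).lowerCentralSeries (n + 1) : Set G) ∪
        leftNormedCommutators S (n + 1)) := by
  induction n with
  | zero =>
    rw [Subgroup.lowerCentralSeries_zero, eq_comm, eq_top_iff, ← hS, zero_add,
      leftNormedCommutators_one]
    exact closure_mono Set.subset_union_right
  | succ n ih =>
    refine le_antisymm ?_ ((closure_le _).mpr (Set.union_subset
      (Subgroup.lowerCentralSeries_antitone ⊤ (Nat.le_succ _))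
      (leftNormedCommutators_subset_lowerCentralSeries S (n + 1))))
    have key := commutator_closure_le_closure_image2_sup
      (((⊤ : Subgroup G).lowerCentralSeries (n + 1) : Set G) ∪ leftNormedCommutators S (n + 1))
      S ((⊤ : Subgroup G).lowerCentralSeries (n + 2)) (by rw [← ih, hS]; rfl)
    rw [← ih, hS, Set.image2_union_left, ← leftNormedCommutators_succ_succ] at key
    refine key.trans (sup_le (closure_mono (Set.union_subset_union_left _ ?_))
      fun g hg => subset_closure (Or.inl hg))
    rintro _ ⟨g, hg, s, -, rfl⟩
    exact commutator_mem_commutator hg (mem_top s)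

end

/-- If `G` is generated by `S`, then `γ_c(G)` is generated by `γ_{c+1}(G)`
together with the left-normed iterated commutators of length `c` with entries
in `S`.  (Here `γ_k(G) = lowerCentralSeries G (k - 1)`.) -/
theorem lowerCentralSeries_eq_closure_iterated_commutators {G : Type*} [Group G]
    (S : Set G) (hS : Subgroup.closure S = ⊤) (c : ℕ) (hc : 1 ≤ c) :
    (⊤ : Subgroup G).lowerCentralSeries (c - 1) =
      Subgroup.closure (((⊤ : Subgroup G).lowerCentralSeries c : Set G) ∪
        {g | ∃ l : List G, l.length = c ∧ (∀ x ∈ l, x ∈ S) ∧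
          g = leftNormedCommutator l}) := by
  obtain ⟨n, rfl⟩ := Nat.exists_eq_add_of_le' hc
  exact lowerCentralSeries_eq_closure_leftNormedCommutators hS n
end
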